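/- Let n be a positive natural number, p : Fin n → ℝ with 0 < p_i < 1 for all i, and let m be a real number with 0 < m < n. Define ψ′(t) = ∑_{i=1}^n p_i·e^t / (1 − p_i + p_i·e^t). Then there exists a unique t* ∈ ℝ (the saddle point) satisfying ψ′(t*) = m. -/

import Mathlib

/-!
Each summand `p e^t / (1 - p + p e^t)` of `ψ'` is the logistic sigmoid shifted by the log-odds
`log (p / (1 - p))`. A sum of `n` shifted sigmoids is continuous, strictly increasing and runs
from `0` to `n`, so by the intermediate value theorem it takes every value of `(0, n)` exactly once.
-/

open Real Filter Topology

theorem existsUnique_eq_of_strictMono_of_tendsto {α β : Type*} [LinearOrder α] [Nonempty α]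
    [TopologicalSpace α] [PreconnectedSpace α] [LinearOrder β] [TopologicalSpace β]
    [OrderTopology β] {f : α → β} {a b m : β}
    (hcont : Continuous f) (hmono : StrictMono f)
    (hbot : Tendsto f atBot (𝓝 a)) (htop : Tendsto f atTop (𝓝 b)) (ham : a < m) (hmb : m < b) :
    ∃! t, f t = m := by
  obtain ⟨t, ht⟩ := mem_range_of_exists_le_of_exists_ge hcont
    ((hbot.eventually_lt_const ham).exists.imp fun _ ↦ le_of_lt)
    ((htop.eventually_const_lt hmb).exists.imp fun _ ↦ le_of_lt)
  exact ⟨t, ht, fun s hs ↦ hmono.injective (hs.trans ht.symm)⟩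

theorem mul_exp_div_eq_sigmoid {p : ℝ} (hp0 : 0 < p) (hp1 : p < 1) (t : ℝ) :
    p * exp t / (1 - p + p * exp t) = sigmoid (t + log (p / (1 - p))) := by
  have hq : 0 < 1 - p := by linarith
  rw [sigmoid_def, neg_add, exp_add, exp_neg, exp_neg, exp_log (div_pos hp0 hq)]
  field_simp
  ring

section SumSigmoid

variable {ι : Type*} [Fintype ι] (c : ι → ℝ)

theorem continuous_sum_sigmoid_add : Continuous fun t ↦ ∑ i, sigmoid (t + c i) := by
  fun_prop

theorem strictMono_sum_sigmoid_add [Nonempty ι] : StrictMono fun t ↦ ∑ i, sigmoid (t + c i) :=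
  fun _ _ hst ↦ Finset.sum_lt_sum_of_nonempty Finset.univ_nonempty
    fun i _ ↦ sigmoid_strictMono (add_lt_add_left hst (c i))

theorem tendsto_sum_sigmoid_add_atBot : Tendsto (fun t ↦ ∑ i, sigmoid (t + c i)) atBot (𝓝 0) := by
  simpa using tendsto_finsetSum Finset.univ fun i _ ↦
    tendsto_sigmoid_atBot.comp (tendsto_atBot_add_const_right _ (c i) tendsto_id)

theorem tendsto_sum_sigmoid_add_atTop :
    Tendsto (fun t ↦ ∑ i, sigmoid (t + c i)) atTop (𝓝 (Fintype.card ι)) := by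
  simpa using tendsto_finsetSum Finset.univ fun i _ ↦
    tendsto_sigmoid_atTop.comp (tendsto_atTop_add_const_right _ (c i) tendsto_id)

theorem existsUnique_sum_sigmoid_add_eq {m : ℝ} (hm0 : 0 < m) (hmc : m < Fintype.card ι) :
    ∃! t, ∑ i, sigmoid (t + c i) = m := by
  have : Nonempty ι := Fintype.card_pos_iff.mp (by exact_mod_cast hm0.trans hmc)
  exact existsUnique_eq_of_strictMono_of_tendsto (continuous_sum_sigmoid_add c)
    (strictMono_sum_sigmoid_add c) (tendsto_sum_sigmoid_add_atBot c)
    (tendsto_sum_sigmoid_add_atTop c) hm0 hmc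

end SumSigmoid

theorem saddle_point_exists_unique_general (n : ℕ) (p : Fin n → ℝ)
    (hp : ∀ i, 0 < p i ∧ p i < 1) (m : ℝ) (hm0 : 0 < m) (hmn : m < n)
    (ψ' : ℝ → ℝ)
    (hψ' : ∀ t, ψ' t = ∑ i, p i * Real.exp t / (1 - p i + p i * Real.exp t)) :
    ∃! tstar : ℝ, ψ' tstar = m := by
  have hψ'_sigmoid : ψ' = fun t ↦ ∑ i, sigmoid (t + log (p i / (1 - p i))) := by
    funext t
    rw [hψ']
    exact Finset.sum_congr rfl fun i _ ↦ mul_exp_div_eq_sigmoid (hp i).1 (hp i).2 t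
  rw [hψ'_sigmoid]
  exact existsUnique_sum_sigmoid_add_eq _ hm0 (by simpa using hmn)

/-- Existence and uniqueness of the saddle point: for `0 < m < n` there is a unique
`t⋆ ∈ ℝ` with `ψ′(t⋆) = ∑ᵢ pᵢ e^{t⋆} / (1 − pᵢ + pᵢ e^{t⋆}) = m`, when every
`pᵢ ∈ (0,1)`. -/
theorem saddle_point_exists_unique (n : ℕ) (hn : 0 < n) (p : Fin n → ℝ)
    (hp : ∀ i, 0 < p i ∧ p i < 1) (m : ℝ) (hm0 : 0 < m) (hmn : m < n)
    (ψ' : ℝ → ℝ)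
    (hψ' : ∀ t, ψ' t = ∑ i, p i * Real.exp t / (1 - p i + p i * Real.exp t)) :
    ∃! tstar : ℝ, ψ' tstar = m :=
  saddle_point_exists_unique_general n p hp m hm0 hmn ψ' hψ'
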